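/- Let E be a directed graph that is the disjoint union of two subgraphs E₁ and E₂ such that both G(E₁) and G(E₂) are infinite. Then the topology on G(E) in which every nonzero element is isolated and the neighborhoods of 0 are the sets {0} ∪ (C ∩ G(E₁)\{0}) for cofinite subsets C of G(E₁), makes G(E) a Hausdorff locally compact, non-compact, non-discrete quasi-topological semigroup (separately continuous multiplication and continuous inversion). -/

import Mathlib

/-- A directed graph: vertices, edges, source and range maps. -/
structure DGraph where
  V : Type
  E : Type
  s : E → V
  r : E → V

namespace DGraph

variable {Q : DGraph}

/-- `pOk Q a l` : the list of edges `l` forms a valid path starting at vertex `a`. -/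
def pOk (Q : DGraph) : Q.V → List Q.E → Prop
  | _, [] => True
  | a, e :: l => Q.s e = a ∧ pOk Q (Q.r e) l

/-- The end vertex of an edge-list starting at `a`. -/
def pRng (Q : DGraph) (a : Q.V) (l : List Q.E) : Q.V :=
  l.foldl (fun _ e => Q.r e) a

theorem pRng_append (a : Q.V) (l₁ l₂ : List Q.E) :
    pRng Q a (l₁ ++ l₂) = pRng Q (pRng Q a l₁) l₂ :=
  List.foldl_append

theorem pOk_append {a : Q.V} {l₁ l₂ : List Q.E} (h₁ : pOk Q a l₁)
    (h₂ : pOk Q (pRng Q a l₁) l₂) : pOk Q a (l₁ ++ l₂) := by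
  induction l₁ generalizing a with
  | nil => simpa [pRng] using h₂
  | cons e l ih =>
      obtain ⟨he, hl⟩ := h₁
      exact ⟨he, ih hl h₂⟩

theorem pOk_drop {a : Q.V} {l₁ l₂ : List Q.E} (h : pOk Q a (l₁ ++ l₂)) :
    pOk Q (pRng Q a l₁) l₂ := by
  induction l₁ generalizing a with
  | nil => simpa [pRng] using h
  | cons e l ih => exact ih h.2

/-- A (finite, directed) path in the graph `Q`: a start vertex together with a
compatible list of edges.  Paths of length `0` are vertices. -/
structure GPath (Q : DGraph) where
  start : Q.V
  edges : List Q.E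
  ok : pOk Q start edges

/-- The source `s(p)` of a path. -/
def GPath.src (p : GPath Q) : Q.V := p.start

/-- The range `r(p)` of a path. -/
def GPath.rng (p : GPath Q) : Q.V := pRng Q p.start p.edges

/-- The length `|p|` of a path. -/
def GPath.length (p : GPath Q) : ℕ := p.edges.length

/-- The trivial (length zero) path at a vertex `a`. -/
def GPath.triv (Q : DGraph) (a : Q.V) : GPath Q := ⟨a, [], trivial⟩

/-- Concatenation of composable paths. -/
def GPath.comp (p q : GPath Q) (h : p.rng = q.start) : GPath Q :=
  ⟨p.start, p.edges ++ q.edges, pOk_append p.ok (by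
    have hq := q.ok
    rw [← h] at hq
    exact hq)⟩

theorem GPath.comp_rng (p q : GPath Q) (h : p.rng = q.start) :
    (p.comp q h).rng = q.rng := by
  show pRng Q p.start (p.edges ++ q.edges) = q.rng
  rw [pRng_append, show pRng Q p.start p.edges = q.start from h]
  rfl

theorem exists_sub {p q : GPath Q} (h1 : q.start = p.start)
    (h2 : p.edges <+: q.edges) :
    ∃ w : GPath Q, w.start = p.rng ∧ w.rng = q.rng ∧ p.edges ++ w.edges = q.edges := by
  obtain ⟨t, ht⟩ := h2
  have hok : pOk Q p.start (p.edges ++ t) := by rw [ht, ← h1]; exact q.ok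
  refine ⟨⟨p.rng, t, pOk_drop hok⟩, rfl, ?_, ht⟩
  show pRng Q (pRng Q p.start p.edges) t = pRng Q q.start q.edges
  rw [← pRng_append, ht, ← h1]

/-- If the path `q` decomposes as `p·w`, this is the path `w`. -/
noncomputable def subPath (p q : GPath Q) (h1 : q.start = p.start)
    (h2 : p.edges <+: q.edges) : GPath Q :=
  (exists_sub h1 h2).choose

theorem subPath_spec (p q : GPath Q) (h1 : q.start = p.start)
    (h2 : p.edges <+: q.edges) :
    (subPath p q h1 h2).start = p.rng ∧ (subPath p q h1 h2).rng = q.rng ∧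
      p.edges ++ (subPath p q h1 h2).edges = q.edges :=
  (exists_sub h1 h2).choose_spec

/-- The graph inverse semigroup `G(E)` over the graph `Q`: the element `0`
together with the elements `u v⁻¹` where `u, v` are paths with `r(u) = r(v)`. -/
inductive GIS (Q : DGraph) : Type
  | zero : GIS Q
  | elm (u v : GPath Q) (h : u.rng = v.rng) : GIS Q

instance : Zero (GIS Q) := ⟨GIS.zero⟩

-- Multiplication in the graph inverse semigroup:
-- `u₁v₁⁻¹ · u₂v₂⁻¹ = u₁wv₂⁻¹` if `u₂ = v₁w`, `u₁(v₂w)⁻¹` if `v₁ = u₂w`, `0` otherwise.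
open Classical in
noncomputable def GIS.mul : GIS Q → GIS Q → GIS Q
  | .zero, _ => .zero
  | _, .zero => .zero
  | .elm u₁ v₁ h₁, .elm u₂ v₂ h₂ =>
    if hA : u₂.start = v₁.start ∧ v₁.edges <+: u₂.edges then
      GIS.elm (u₁.comp (subPath v₁ u₂ hA.1 hA.2)
          (by rw [(subPath_spec v₁ u₂ hA.1 hA.2).1, h₁]))
        v₂
        (by rw [GPath.comp_rng, (subPath_spec v₁ u₂ hA.1 hA.2).2.1, h₂])
    else if hB : v₁.start = u₂.start ∧ u₂.edges <+: v₁.edges then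
      GIS.elm u₁
        (v₂.comp (subPath u₂ v₁ hB.1 hB.2)
          (by rw [(subPath_spec u₂ v₁ hB.1 hB.2).1, h₂]))
        (by rw [GPath.comp_rng, (subPath_spec u₂ v₁ hB.1 hB.2).2.1, h₁])
    else .zero

noncomputable instance : Mul (GIS Q) := ⟨GIS.mul⟩

/-- The inversion map of the graph inverse semigroup: `(uv⁻¹)⁻¹ = vu⁻¹`, `0⁻¹ = 0`. -/
def GIS.inv : GIS Q → GIS Q
  | .zero => .zero
  | .elm u v h => .elm v u h.symm

/-- The canonical identification of a path `u` with the element `u · r(u)⁻¹` of `G(E)`. -/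
def toGIS (p : GPath Q) : GIS Q := GIS.elm p (GPath.triv Q p.rng) rfl

end DGraph


open DGraph in
/-- The disjoint union of two directed graphs. -/
def dUnion (Q₁ Q₂ : DGraph) : DGraph :=
  ⟨Q₁.V ⊕ Q₂.V, Q₁.E ⊕ Q₂.E, Sum.map Q₁.s Q₂.s, Sum.map Q₁.r Q₂.r⟩

open DGraph in
/-- The elements of `G(E₁ ⊔ E₂)` lying in the copy of `G(E₁)` (together with `0`). -/
def inLeft (Q₁ Q₂ : DGraph) : GIS (dUnion Q₁ Q₂) → Prop
  | .zero => True
  | .elm u _ _ => ∃ a, u.start = Sum.inl a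

open DGraph in
/-- The topology on `G(E₁ ⊔ E₂)` in which every nonzero element is isolated and the
neighborhoods of `0` are the sets `{0} ∪ (C ∩ (G(E₁) \ {0}))` for cofinite `C ⊆ G(E₁)`. -/
def dTop (Q₁ Q₂ : DGraph) : TopologicalSpace (GIS (dUnion Q₁ Q₂)) where
  IsOpen U := (0 : GIS (dUnion Q₁ Q₂)) ∈ U → {x | inLeft Q₁ Q₂ x ∧ x ∉ U}.Finite
  isOpen_univ := fun _ => by simp
  isOpen_inter := fun U V hU hV h => by
    refine ((hU h.1).union (hV h.2)).subset ?_
    rintro x ⟨hl, hx⟩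
    by_cases hxU : x ∈ U
    · exact Or.inr ⟨hl, fun hv => hx ⟨hxU, hv⟩⟩
    · exact Or.inl ⟨hl, hxU⟩
  isOpen_sUnion := fun S hS h => by
    obtain ⟨U, hUS, h0U⟩ := h
    refine (hS U hUS h0U).subset ?_
    rintro x ⟨hl, hx⟩
    exact ⟨hl, fun hU => hx ⟨U, hUS, hU⟩⟩

open DGraph

/-!
Nonzero elements are isolated, so everything happens at `0`, whose neighbourhoods are the sets
containing almost all of the copy `L` of `G(E₁)`. Thus `L` is the one-point compactification of
the discrete set `L \ {0}`, which gives local compactness, while the infinite closed discrete set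
`G(E₂) \ {0}` rules out compactness. A map fixing `0` and sending `L` into `L` is continuous as
soon as its fibres over nonzero points are finite. Left translations qualify: `L` is a left
ideal, and `u₁v₁⁻¹ · u₂v₂⁻¹ = uv⁻¹` determines `u₂v₂⁻¹` from the length of `u₂`, which is at most
`|v₁| + |u|`. Inversion is a bijection preserving `L`, and right translations are conjugates of
left translations by the anti-automorphism `x ↦ x⁻¹`.
-/

open Set Filter Topology

def OpenIffCofiniteAt (X : Type*) [TopologicalSpace X] (z : X) (L : Set X) : Prop :=
  ∀ U : Set X, IsOpen U ↔ (z ∈ U → (L \ U).Finite)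

namespace OpenIffCofiniteAt

variable {X : Type*} [TopologicalSpace X] {z : X} {L : Set X}

theorem isOpen_of_notMem (hX : OpenIffCofiniteAt X z L) {U : Set X} (hU : z ∉ U) : IsOpen U :=
  (hX U).2 fun h => absurd h hU

theorem isOpen_singleton (hX : OpenIffCofiniteAt X z L) {x : X} (hx : x ≠ z) : IsOpen {x} :=
  hX.isOpen_of_notMem hx.symm

theorem isOpen_compl_singleton (hX : OpenIffCofiniteAt X z L) (x : X) : IsOpen {x}ᶜ :=
  (hX _).2 fun _ => (finite_singleton x).subset fun _ hy => not_not.1 hy.2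

theorem t2Space (hX : OpenIffCofiniteAt X z L) : T2Space X := by
  refine ⟨fun x y hxy => ?_⟩
  by_cases hx : x = z
  · exact ⟨{y}ᶜ, {y}, hX.isOpen_compl_singleton y, hX.isOpen_singleton (hx ▸ hxy.symm), hxy,
      rfl, disjoint_compl_left⟩
  · exact ⟨{x}, {x}ᶜ, hX.isOpen_singleton hx, hX.isOpen_compl_singleton x, rfl, hxy.symm,
      disjoint_compl_right⟩

theorem isOpen_insert (hX : OpenIffCofiniteAt X z L) : IsOpen (insert z L) :=
  (hX _).2 fun _ => finite_empty.subset fun _ hy => hy.2 (mem_insert_of_mem z hy.1)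

theorem isCompact_insert (hX : OpenIffCofiniteAt X z L) : IsCompact (insert z L) := by
  have hlim : Tendsto ((↑) : L → X) cofinite (𝓝 z) := by
    intro U hU
    obtain ⟨V, hVU, hV, hzV⟩ := mem_nhds_iff.1 hU
    refine mem_cofinite.2 (((hX V).1 hV hzV).preimage Subtype.val_injective.injOn |>.subset ?_)
    intro y hy
    exact ⟨y.2, fun hyV => hy (hVU hyV)⟩
  simpa using hlim.isCompact_insert_range_of_cofinite

theorem locallyCompactSpace (hX : OpenIffCofiniteAt X z L) : LocallyCompactSpace X := by
  have := hX.t2Space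
  suffices WeaklyLocallyCompactSpace X from inferInstance
  refine ⟨fun x => ?_⟩
  by_cases hx : x = z
  · exact ⟨insert z L, hX.isCompact_insert, hX.isOpen_insert.mem_nhds (hx ▸ mem_insert z L)⟩
  · exact ⟨{x}, isCompact_singleton, (hX.isOpen_singleton hx).mem_nhds rfl⟩

theorem not_compactSpace (hX : OpenIffCofiniteAt X z L) (hL : Lᶜ.Infinite) :
    ¬CompactSpace X := by
  intro _
  have hcpt : IsCompact (insert z L)ᶜ := hX.isOpen_insert.isClosed_compl.isCompact
  have hdisc : IsDiscrete (insert z L)ᶜ := isDiscrete_iff_forall_mem_exists_isOpen.2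
    fun y hy => ⟨{y}, hX.isOpen_singleton fun h => hy (h ▸ mem_insert z L), by simpa using hy⟩
  refine (hL.sdiff (finite_singleton z)) ((hcpt.finite hdisc).subset ?_)
  intro y hy
  simpa [not_or] using hy.symm

theorem not_discreteTopology (hX : OpenIffCofiniteAt X z L) (hL : L.Infinite) :
    ¬DiscreteTopology X :=
  fun _ => (hL.sdiff (finite_singleton z)) ((hX {z}).1 (isOpen_discrete _) rfl)

theorem continuous {Y : Type*} [TopologicalSpace Y] {z' : Y} {L' : Set Y}
    (hX : OpenIffCofiniteAt X z L) (hY : OpenIffCofiniteAt Y z' L') {f : X → Y}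
    (hz : f z = z') (hL : MapsTo f L L')
    (hfib : ∀ p ∈ L', p ≠ z' → {x | x ∈ L ∧ f x = p}.Finite) : Continuous f := by
  refine continuous_def.2 fun U hU => (hX _).2 fun hzU => ?_
  have hz'U : z' ∈ U := hz ▸ hzU
  refine (((hY U).1 hU hz'U).biUnion fun p hp => hfib p hp.1 fun h => hp.2 (h ▸ hz'U)).subset ?_
  rintro x ⟨hxL, hxU⟩
  exact mem_biUnion ⟨hL hxL, hxU⟩ ⟨hxL, rfl⟩

end OpenIffCofiniteAt

namespace DGraph

variable {Q : DGraph}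

theorem GPath.ext {p q : GPath Q} (hs : p.start = q.start) (he : p.edges = q.edges) : p = q := by
  cases p; cases q; simp_all

theorem GPath.comp_eq_self {p q : GPath Q} (h : p.rng = q.start) (hq : q.edges = []) :
    p.comp q h = p :=
  GPath.ext rfl (by simp [GPath.comp, hq])

theorem subPath_edges_eq_nil {p q : GPath Q} (h1 : q.start = p.start) (h2 : p.edges <+: q.edges)
    (h3 : q.edges <+: p.edges) : (subPath p q h1 h2).edges = [] := by
  have hlen := congrArg List.length (subPath_spec p q h1 h2).2.2
  rw [List.length_append] at hlen
  exact List.length_eq_zero_iff.1 (by have := h3.length_le; omega)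

namespace GIS

@[simp] theorem zero_def : (GIS.zero : GIS Q) = 0 := rfl

@[simp] theorem zero_mul (a : GIS Q) : 0 * a = 0 := rfl

@[simp] theorem mul_zero (a : GIS Q) : a * 0 = 0 := by cases a <;> rfl

@[simp] theorem inv_zero : (0 : GIS Q).inv = 0 := rfl

@[simp] theorem inv_inv (a : GIS Q) : a.inv.inv = a := by cases a <;> rfl

@[simp] theorem elm_ne_zero {u v : GPath Q} {h : u.rng = v.rng} : GIS.elm u v h ≠ 0 :=
  fun h => by cases h

theorem inv_mul (x y : GIS Q) : (x * y).inv = y.inv * x.inv := by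
  rcases x with _ | ⟨u₁, v₁, h₁⟩
  · simp
  rcases y with _ | ⟨u₂, v₂, h₂⟩
  · simp
  change (GIS.mul _ _).inv = GIS.mul _ _
  simp only [GIS.mul, GIS.inv]
  split_ifs with hA hB
  · exact (GIS.elm.injEq ..).mpr ⟨(GPath.comp_eq_self _ (subPath_edges_eq_nil _ hB.2 hA.2)).symm,
      GPath.comp_eq_self _ (subPath_edges_eq_nil _ hA.2 hB.2)⟩
  all_goals rfl

theorem elm_mul_elm_eq_elm {u₁ v₁ u₂ v₂ u v : GPath Q} {h₁ : u₁.rng = v₁.rng}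
    {h₂ : u₂.rng = v₂.rng} {h : u.rng = v.rng}
    (he : GIS.elm u₁ v₁ h₁ * GIS.elm u₂ v₂ h₂ = GIS.elm u v h) :
    (u₂.start = v₁.start ∧ u.start = u₁.start ∧ v = v₂ ∧
      ∃ w, u₂.edges = v₁.edges ++ w ∧ u.edges = u₁.edges ++ w) ∨
    (v₁.start = u₂.start ∧ u = u₁ ∧ v.start = v₂.start ∧
      ∃ w, v₁.edges = u₂.edges ++ w ∧ v.edges = v₂.edges ++ w) := by
  change GIS.mul _ _ = _ at he
  simp only [GIS.mul] at he
  split_ifs at he with hA hB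
  · obtain ⟨rfl, rfl⟩ := GIS.elm.inj he
    exact Or.inl ⟨hA.1, rfl, rfl, _, (subPath_spec v₁ u₂ hA.1 hA.2).2.2.symm, rfl⟩
  · obtain ⟨rfl, rfl⟩ := GIS.elm.inj he
    exact Or.inr ⟨hB.1, rfl, rfl, _, (subPath_spec u₂ v₁ hB.1 hB.2).2.2.symm, rfl⟩

/-- The two cases of the product (`v₁` a prefix of `u₂`, or `u₂` a prefix of `v₁`) fit one formula
thanks to truncated subtraction. -/
theorem right_factor_of_elm_mul_elm_eq_elm {u₁ v₁ u₂ v₂ u v : GPath Q} {h₁ : u₁.rng = v₁.rng}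
    {h₂ : u₂.rng = v₂.rng} {h : u.rng = v.rng}
    (he : GIS.elm u₁ v₁ h₁ * GIS.elm u₂ v₂ h₂ = GIS.elm u v h) :
    u₂.start = v₁.start ∧ v₂.start = v.start ∧
      u₂.edges.length ≤ v₁.edges.length + u.edges.length ∧
      u₂.edges = (v₁.edges ++ u.edges.drop u₁.edges.length).take u₂.edges.length ∧
      v₂.edges = v.edges.take (v.edges.length - (v₁.edges.length - u₂.edges.length)) := by
  rcases elm_mul_elm_eq_elm he with ⟨hs, -, rfl, w, hu₂, hu⟩ | ⟨hs, rfl, hvs, w, hv₁, hv⟩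
  · refine ⟨hs, rfl, ?_, ?_, ?_⟩ <;> simp [hu₂, hu]
  · refine ⟨hs.symm, hvs.symm, ?_, ?_, ?_⟩ <;> simp [hv₁, hv, Nat.add_assoc]

def headLength : GIS Q → ℕ
  | zero => 0
  | elm u _ _ => u.edges.length

theorem finite_setOf_mul_eq (a : GIS Q) {p : GIS Q} (hp : p ≠ 0) : {x | a * x = p}.Finite := by
  rcases a with _ | ⟨u₁, v₁, h₁⟩
  · simp [hp.symm]
  rcases p with _ | ⟨u, v, h⟩
  · exact absurd rfl hp
  refine Set.Finite.of_finite_image (f := headLength)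
    ((Set.finite_Iic (v₁.edges.length + u.edges.length)).subset ?_) ?_
  · rintro _ ⟨_ | ⟨u₂, v₂, h₂⟩, hx, rfl⟩
    · simp at hx
    · exact (right_factor_of_elm_mul_elm_eq_elm hx).2.2.1
  · rintro (_ | ⟨u₂, v₂, h₂⟩) hx (_ | ⟨u₂', v₂', h₂'⟩) hx' hlen
    any_goals simp at hx hx'
    obtain ⟨hs, ht, -, hu, hv⟩ := right_factor_of_elm_mul_elm_eq_elm hx
    obtain ⟨hs', ht', -, hu', hv'⟩ := right_factor_of_elm_mul_elm_eq_elm hx'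
    change u₂.edges.length = u₂'.edges.length at hlen
    exact (GIS.elm.injEq ..).mpr ⟨GPath.ext (hs.trans hs'.symm) (by rw [hu, hu', hlen]),
      GPath.ext (ht.trans ht'.symm) (by rw [hv, hv', hlen])⟩

end GIS

structure Hom (Q Q' : DGraph) where
  onV : Q.V → Q'.V
  onE : Q.E → Q'.E
  s_onE : ∀ e, Q'.s (onE e) = onV (Q.s e)
  r_onE : ∀ e, Q'.r (onE e) = onV (Q.r e)

namespace Hom

variable {Q Q' : DGraph} (f : Hom Q Q')

theorem pOk_map {a : Q.V} {l : List Q.E} (h : pOk Q a l) : pOk Q' (f.onV a) (l.map f.onE) := by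
  induction l generalizing a with
  | nil => trivial
  | cons e l ih => exact ⟨(f.s_onE e).trans (congrArg f.onV h.1), f.r_onE e ▸ ih h.2⟩

theorem pRng_map (a : Q.V) (l : List Q.E) :
    pRng Q' (f.onV a) (l.map f.onE) = f.onV (pRng Q a l) := by
  induction l generalizing a with
  | nil => rfl
  | cons e l ih => exact (congrArg (pRng Q' · _) (f.r_onE e)).trans (ih _)

def mapPath (p : GPath Q) : GPath Q' :=
  ⟨f.onV p.start, p.edges.map f.onE, f.pOk_map p.ok⟩

theorem rng_mapPath (p : GPath Q) : (f.mapPath p).rng = f.onV p.rng :=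
  f.pRng_map p.start p.edges

def mapGIS : GIS Q → GIS Q'
  | .zero => 0
  | .elm u v h => .elm (f.mapPath u) (f.mapPath v) (by rw [rng_mapPath, rng_mapPath, h])

variable {f}

theorem mapPath_injective (hV : Function.Injective f.onV) (hE : Function.Injective f.onE) :
    Function.Injective f.mapPath := fun _ _ h =>
  GPath.ext (hV (congrArg GPath.start h)) ((List.map_injective_iff.2 hE) (congrArg GPath.edges h))

theorem mapGIS_injective (hV : Function.Injective f.onV) (hE : Function.Injective f.onE) :
    Function.Injective f.mapGIS := by
  rintro (_ | ⟨u, v, h⟩) (_ | ⟨u', v', h'⟩) he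
  · rfl
  · exact absurd he.symm GIS.elm_ne_zero
  · exact absurd he GIS.elm_ne_zero
  · obtain ⟨hu, hv⟩ := GIS.elm.inj he
    exact (GIS.elm.injEq ..).mpr ⟨mapPath_injective hV hE hu, mapPath_injective hV hE hv⟩

end Hom

variable {Q₁ Q₂ : DGraph}

def Hom.inl : Hom Q₁ (dUnion Q₁ Q₂) := ⟨Sum.inl, Sum.inl, fun _ => rfl, fun _ => rfl⟩

def Hom.inr : Hom Q₂ (dUnion Q₁ Q₂) := ⟨Sum.inr, Sum.inr, fun _ => rfl, fun _ => rfl⟩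

theorem isLeft_pRng {a : (dUnion Q₁ Q₂).V} {l : List (dUnion Q₁ Q₂).E}
    (h : pOk (dUnion Q₁ Q₂) a l) : (pRng (dUnion Q₁ Q₂) a l).isLeft = a.isLeft := by
  induction l generalizing a with
  | nil => rfl
  | cons e l ih =>
    obtain ⟨rfl, hl⟩ := h
    exact (ih hl).trans (by cases e <;> rfl)

theorem GPath.isLeft_rng (p : GPath (dUnion Q₁ Q₂)) : p.rng.isLeft = p.start.isLeft :=
  isLeft_pRng p.ok

theorem inLeft_elm {u v : GPath (dUnion Q₁ Q₂)} {h : u.rng = v.rng} :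
    inLeft Q₁ Q₂ (.elm u v h) ↔ u.start.isLeft :=
  Sum.isLeft_iff.symm

theorem inLeft_inv {x : GIS (dUnion Q₁ Q₂)} : inLeft Q₁ Q₂ x.inv ↔ inLeft Q₁ Q₂ x := by
  rcases x with _ | ⟨u, v, h⟩
  · exact Iff.rfl
  · rw [GIS.inv, inLeft_elm, inLeft_elm, ← GPath.isLeft_rng, ← h, GPath.isLeft_rng]

theorem inLeft_mul (a : GIS (dUnion Q₁ Q₂)) {x : GIS (dUnion Q₁ Q₂)} (hx : inLeft Q₁ Q₂ x) :
    inLeft Q₁ Q₂ (a * x) := by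
  rcases a with _ | ⟨u₁, v₁, h₁⟩
  · trivial
  rcases x with _ | ⟨u₂, v₂, h₂⟩
  · rw [GIS.zero_def, GIS.mul_zero]; trivial
  generalize hp : GIS.elm u₁ v₁ h₁ * GIS.elm u₂ v₂ h₂ = p
  rcases p with _ | ⟨u, v, h⟩
  · trivial
  rw [inLeft_elm] at hx ⊢
  rcases GIS.elm_mul_elm_eq_elm hp with ⟨hs, hu, -⟩ | ⟨hs, rfl, -⟩
  · rw [hu, ← GPath.isLeft_rng, h₁, GPath.isLeft_rng, ← hs, hx]
  · rw [← GPath.isLeft_rng, h₁, GPath.isLeft_rng, hs, hx]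

theorem infinite_setOf_inLeft [Infinite (GIS Q₁)] :
    {x : GIS (dUnion Q₁ Q₂) | inLeft Q₁ Q₂ x}.Infinite := by
  refine (Set.infinite_range_of_injective
    (Hom.mapGIS_injective (f := Hom.inl) Sum.inl_injective Sum.inl_injective)).mono ?_
  rintro _ ⟨_ | ⟨u, v, h⟩, rfl⟩
  exacts [trivial, ⟨u.start, rfl⟩]

theorem infinite_setOf_not_inLeft [Infinite (GIS Q₂)] :
    {x : GIS (dUnion Q₁ Q₂) | ¬inLeft Q₁ Q₂ x}.Infinite := by
  refine ((Set.infinite_range_of_injective (Hom.mapGIS_injective (f := Hom.inr)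
    Sum.inr_injective Sum.inr_injective)).sdiff (Set.finite_singleton 0)).mono ?_
  rintro _ ⟨⟨_ | ⟨u, v, h⟩, rfl⟩, hne⟩
  · exact absurd rfl hne
  · rintro ⟨a, ha⟩
    cases ha

end DGraph

theorem openIffCofiniteAt_dTop (Q₁ Q₂ : DGraph) :
    @OpenIffCofiniteAt _ (dTop Q₁ Q₂) 0 {x | inLeft Q₁ Q₂ x} :=
  fun _ => Iff.rfl

theorem stmt14 (Q₁ Q₂ : DGraph) (h1 : Infinite (GIS Q₁)) (h2 : Infinite (GIS Q₂)) :
    @T2Space _ (dTop Q₁ Q₂) ∧ @LocallyCompactSpace _ (dTop Q₁ Q₂) ∧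
    ¬ @CompactSpace _ (dTop Q₁ Q₂) ∧ dTop Q₁ Q₂ ≠ ⊥ ∧
    (∀ a : GIS (dUnion Q₁ Q₂),
      @Continuous _ _ (dTop Q₁ Q₂) (dTop Q₁ Q₂) (fun x => a * x) ∧
      @Continuous _ _ (dTop Q₁ Q₂) (dTop Q₁ Q₂) (fun x => x * a)) ∧
    @Continuous _ _ (dTop Q₁ Q₂) (dTop Q₁ Q₂) GIS.inv := by
  let _ := dTop Q₁ Q₂
  have hX := openIffCofiniteAt_dTop Q₁ Q₂
  have hinv : Continuous (GIS.inv : GIS (dUnion Q₁ Q₂) → _) :=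
    hX.continuous hX rfl (fun _ => inLeft_inv.2) fun p _ _ =>
      (Set.finite_singleton p.inv).subset fun x hx => by rw [← hx.2, GIS.inv_inv]; rfl
  have hmul (a : GIS (dUnion Q₁ Q₂)) : Continuous (a * ·) :=
    hX.continuous hX (GIS.mul_zero a) (fun _ => inLeft_mul a) fun _ _ hp =>
      (GIS.finite_setOf_mul_eq a hp).subset fun _ hx => hx.2
  refine ⟨hX.t2Space, hX.locallyCompactSpace, hX.not_compactSpace infinite_setOf_not_inLeft,
    fun h => hX.not_discreteTopology infinite_setOf_inLeft ⟨h⟩, fun a => ⟨hmul a, ?_⟩, hinv⟩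
  have hright : (· * a) = GIS.inv ∘ (a.inv * ·) ∘ GIS.inv :=
    funext fun x => by rw [Function.comp_apply, Function.comp_apply, ← GIS.inv_mul, GIS.inv_inv]
  rw [hright]
  exact hinv.comp ((hmul _).comp hinv)
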